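/- arXiv:1102.1186 — 2 statements merged into one kernel-verified Lean document; each statement's English description precedes it below -/
import Mathlib

section
/- Let $T>0$, $m,d\ge 1$, $0<\gamma<1$, $0\le\rho\le 1$, $\beta>0$, and set $\varepsilon=\frac{1-\gamma}{1-\rho^{2}\gamma}$, $q_*=(1-\rho^{2}\gamma)^{-1}$, $\gamma_1=(1-\gamma)^{-1}$. Let $r:[0,T]\times\mathbb{R}^m\to\mathbb{R}$, $\theta:[0,T]\times\mathbb{R}^m\to\mathbb{R}^d$, $F:[0,T]\times\mathbb{R}^m\to\mathbb{R}^m$ be given, let $\sigma_*$ be an $m\times d$ matrix with $\sigma_*\sigma_*^{\prime}=I_m$, and define $Q(t,y)=\frac{\gamma(1-\rho^{2}\gamma)}{1-\gamma}\left(r(t,y)+\frac{|\theta(t,y)|^{2}}{2(1-\gamma)}\right)$ and $\alpha(t,y)=F(t,y)+\frac{\gamma\sqrt{1-\rho^{2}}\,\beta}{1-\gamma}\,\sigma_*\theta(t,y)$. Suppose $h:[0,T]\times\mathbb{R}^m\to(0,\infty)$ is $C^{1}$ in $t$ and $C^{2}$ in $y$ and satisfies the quasilinear PDE $h_t+Q\,h+\alpha^{\prime}\mathbf{D}_y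 h+\tfrac{\beta^{2}}{2}\mathrm{tr}\,\mathbf{D}_{yy}h+\tfrac{1}{q_*}h^{1-q_*}=0$ on $[0,T]\times\mathbb{R}^m$ with $h(T,\cdot)\equiv 1$. Then the function $z(t,x,y)=x^{\gamma}\,h(t,y)^{\varepsilon}$ satisfies, for all $t\in[0,T]$, $x>0$, $y\in\mathbb{R}^m$, the HJB equation $z_t+H(t,(x,y),\mathbf{D}_{\varsigma}z,\mathbf{D}_{\varsigma\varsigma}z)=0$ and $z(T,x,y)=x^{\gamma}$, where for $\mathbf{q}=(\mathbf{q}_1,\widetilde{\mathbf{q}})$ with $\mathbf{q}_1>0$ and symmetric $\mathbf{M}$ with blocks $\mu=\mathbf{M}_{11}<0$, $\widetilde{\mu}$ (mixed column) and $\mathbf{M}_0$ (lower $m\times m$ block), $H(t,(x,y),\mathbf{q},\mathbf{M})=x\,r(t,y)\mathbf{q}_1+(F(t,y))^{\prime}\widetilde{\mathbf{q}}+\frac{1}{\gamma_1}\left(\frac{\gamma}{\mathbf{q}_1}\right)^{\gamma_1-1}+\frac{|\theta(t,y)\mathbf{q}_1+\beta\sqrt{1-\rho^{2}}\,\sigma_*^{\prime}\widetilde{\mu}|^{2}}{2|\mu|}+\frac{\beta^{2}}{2}\mathrm{tr}\,\mathbf{M}_0$.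 -/
open Matrix

/-- Partial derivative of `f : ℝ^m → ℝ` at `y` in the `i`-th coordinate direction. -/
noncomputable def pderiv1 {m : ℕ} (f : (Fin m → ℝ) → ℝ) (y : Fin m → ℝ) (i : Fin m) : ℝ :=
  deriv (fun s => f (Function.update y i s)) (y i)

set_option maxHeartbeats 4000000

/-- (Distortion power transformation.) If `h > 0` is `C¹` in `t`, `C²` in `y`
(the time derivative `ht'`, the spatial gradient `hy` and the spatial Hessian `hyy` being its
derivatives, continuously) and satisfies the quasilinear PDE
`h_t + Q h + α' D_y h + (β²/2) tr D_yy h + (1/q*) h^{1-q*} = 0` on `[0,T] × ℝ^m` with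
`h(T,·) ≡ 1`, then `z(t,x,y) = x^γ h(t,y)^ε` satisfies the HJB equation
`z_t + H(t,(x,y),Dz,D²z) = 0` with terminal value `z(T,x,y) = x^γ`, where `H` is the Hamilton
function of the consumption–investment problem. -/
theorem stmt3 (T : ℝ) (hT : 0 < T) (m d : ℕ) (hm : 1 ≤ m) (hd : 1 ≤ d)
    (γ ρ β ε qs γ1 : ℝ)
    (hγ0 : 0 < γ) (hγlt : γ < 1) (hρ0 : 0 ≤ ρ) (hρ1 : ρ ≤ 1) (hβ : 0 < β)
    (hε : ε = (1 - γ) / (1 - ρ ^ 2 * γ)) (hqs : qs = (1 - ρ ^ 2 * γ)⁻¹)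
    (hγ1 : γ1 = (1 - γ)⁻¹)
    (r : ℝ → (Fin m → ℝ) → ℝ) (θ : ℝ → (Fin m → ℝ) → (Fin d → ℝ))
    (F : ℝ → (Fin m → ℝ) → (Fin m → ℝ))
    (σs : Matrix (Fin m) (Fin d) ℝ) (hσs : σs * σs.transpose = 1)
    (h : ℝ → (Fin m → ℝ) → ℝ)
    (hpos : ∀ t ∈ Set.Icc 0 T, ∀ y, 0 < h t y)
    (ht' : ℝ → (Fin m → ℝ) → ℝ)
    (hy : ℝ → (Fin m → ℝ) → (Fin m → ℝ))
    (hyy : ℝ → (Fin m → ℝ) → Matrix (Fin m) (Fin m) ℝ)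
    (hdt : ∀ t ∈ Set.Icc 0 T, ∀ y, HasDerivAt (fun s => h s y) (ht' t y) t)
    (hdy : ∀ t ∈ Set.Icc 0 T, ∀ y, ∀ i,
      HasDerivAt (fun s => h t (Function.update y i s)) (hy t y i) (y i))
    (hdyy : ∀ t ∈ Set.Icc 0 T, ∀ y, ∀ i j,
      HasDerivAt (fun s => hy t (Function.update y j s) i) (hyy t y i j) (y j))
    (hcontt : ∀ y, ContinuousOn (fun t => ht' t y) (Set.Icc 0 T))
    (hconty : ∀ t ∈ Set.Icc 0 T, ∀ i, Continuous (fun y => hy t y i))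
    (hcontyy : ∀ t ∈ Set.Icc 0 T, ∀ i j, Continuous (fun y => hyy t y i j))
    (hPDE : ∀ t ∈ Set.Icc 0 T, ∀ y,
      ht' t y
        + (γ * (1 - ρ ^ 2 * γ) / (1 - γ))
            * (r t y + (θ t y ⬝ᵥ θ t y) / (2 * (1 - γ))) * h t y
        + (F t y + ((γ * Real.sqrt (1 - ρ ^ 2) * β) / (1 - γ)) • (σs *ᵥ θ t y)) ⬝ᵥ hy t y
        + β ^ 2 / 2 * (hyy t y).trace
        + (1 / qs) * (h t y) ^ (1 - qs) = 0)
    (hterm : ∀ y, h T y = 1) :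
    let z : ℝ → ℝ → (Fin m → ℝ) → ℝ := fun t x y => x ^ γ * (h t y) ^ ε
    ∀ t ∈ Set.Icc 0 T, ∀ x : ℝ, 0 < x → ∀ y : Fin m → ℝ,
      z T x y = x ^ γ ∧
      (let Q1 : ℝ := deriv (fun u => z t u y) x
       let Qt : Fin m → ℝ := fun i => pderiv1 (z t x) y i
       let Mu : ℝ := deriv (fun u => deriv (fun u' => z t u' y) u) x
       let Mt : Fin m → ℝ := fun i => deriv (fun u => pderiv1 (z t u) y i) x
       let M0 : Matrix (Fin m) (Fin m) ℝ :=
         Matrix.of fun i j => pderiv1 (fun y' => pderiv1 (z t x) y' i) y j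
       let w : Fin d → ℝ := Q1 • θ t y + (β * Real.sqrt (1 - ρ ^ 2)) • (σs.transpose *ᵥ Mt)
       deriv (fun s => z s x y) t
         + (x * r t y * Q1 + F t y ⬝ᵥ Qt + (1 / γ1) * (γ / Q1) ^ (γ1 - 1)
            + (w ⬝ᵥ w) / (2 * |Mu|) + β ^ 2 / 2 * M0.trace) = 0) := by
  intro z t htmem x hx y
  have h1γ : (0:ℝ) < 1 - γ := by linarith
  have hρsq : ρ ^ 2 ≤ 1 := by nlinarith
  have hργ : (0:ℝ) < 1 - ρ ^ 2 * γ := by nlinarith [mul_le_mul_of_nonneg_right hρsq hγ0.le]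
  have Hpos : 0 < h t y := hpos t htmem y
  have Hne : h t y ≠ 0 := Hpos.ne'
  have hxne : x ≠ 0 := hx.ne'
  refine ⟨?_, ?_⟩
  · show x ^ γ * (h T y) ^ ε = x ^ γ
    rw [hterm y, Real.one_rpow, mul_one]
  intro Q1 Qt Mu Mt M0 w
  -- first spatial derivative of z in x
  have hQ1 : Q1 = γ * x ^ (γ - 1) * h t y ^ ε :=
    ((Real.hasDerivAt_rpow_const (Or.inl hxne)).mul_const _).deriv
  -- spatial gradient in y
  have hQt : ∀ i, Qt i = x ^ γ * (hy t y i * ε * h t y ^ (ε - 1)) := by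
    intro i
    have hne : h t (Function.update y i (y i)) ≠ 0 := by
      rw [Function.update_eq_self]; exact Hne
    have H : HasDerivAt (fun s => x ^ γ * h t (Function.update y i s) ^ ε)
        (x ^ γ * (hy t y i * ε * h t y ^ (ε - 1))) (y i) := by
      have A := ((hdy t htmem y i).rpow_const (p := ε) (Or.inl hne)).const_mul ((x:ℝ) ^ γ)
      simp only [Function.update_eq_self] at A
      exact A
    exact H.deriv
  -- second derivative in x
  have hinner : Set.EqOn (fun u => deriv (fun u' => z t u' y) u)
      (fun u => γ * u ^ (γ - 1) * h t y ^ ε) (Set.Ioi 0) := by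
    intro u hu
    exact ((Real.hasDerivAt_rpow_const (Or.inl (ne_of_gt (Set.mem_Ioi.mp hu)))).mul_const _).deriv
  have hev : (fun u => deriv (fun u' => z t u' y) u)
      =ᶠ[nhds x] (fun u => γ * u ^ (γ - 1) * h t y ^ ε) :=
    Filter.eventuallyEq_of_mem (Ioi_mem_nhds hx) hinner
  have hMu : Mu = γ * ((γ - 1) * x ^ (γ - 1 - 1)) * h t y ^ ε := by
    have h0 : Mu = deriv (fun u => γ * u ^ (γ - 1) * h t y ^ ε) x := hev.deriv_eq
    exact h0.trans ((((Real.hasDerivAt_rpow_const (Or.inl hxne)).const_mul γ).mul_const _).deriv)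
  -- mixed second derivatives
  have hMt : ∀ i, Mt i = γ * x ^ (γ - 1) * (ε * h t y ^ (ε - 1) * hy t y i) := by
    intro i
    have hne : h t (Function.update y i (y i)) ≠ 0 := by
      rw [Function.update_eq_self]; exact Hne
    have hfe : (fun u => pderiv1 (z t u) y i)
        = fun u => u ^ γ * (ε * h t y ^ (ε - 1) * hy t y i) := by
      funext u
      have H : HasDerivAt (fun s => u ^ γ * h t (Function.update y i s) ^ ε)
          (u ^ γ * (hy t y i * ε * h t y ^ (ε - 1))) (y i) := by
        have A := ((hdy t htmem y i).rpow_const (p := ε) (Or.inl hne)).const_mul ((u:ℝ) ^ γ)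
        simp only [Function.update_eq_self] at A
        exact A
      exact H.deriv.trans (by ring)
    show deriv (fun u => pderiv1 (z t u) y i) x = _
    rw [hfe]
    exact ((Real.hasDerivAt_rpow_const (Or.inl hxne)).mul_const _).deriv
  -- second derivatives in y
  have hM0 : ∀ i j, M0 i j = x ^ γ * (ε * (hy t y j * (ε - 1) * h t y ^ (ε - 1 - 1)) * hy t y i
      + ε * h t y ^ (ε - 1) * hyy t y i j) := by
    intro i j
    have hg : (fun y' => pderiv1 (z t x) y' i)
        = fun y' => x ^ γ * (ε * h t y' ^ (ε - 1) * hy t y' i) := by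
      funext y'
      have hne : h t (Function.update y' i (y' i)) ≠ 0 := by
        rw [Function.update_eq_self]; exact (hpos t htmem y').ne'
      have H : HasDerivAt (fun s => x ^ γ * h t (Function.update y' i s) ^ ε)
          (x ^ γ * (hy t y' i * ε * h t y' ^ (ε - 1))) (y' i) := by
        have A := ((hdy t htmem y' i).rpow_const (p := ε) (Or.inl hne)).const_mul ((x:ℝ) ^ γ)
        simp only [Function.update_eq_self] at A
        exact A
      exact H.deriv.trans (by ring)
    show pderiv1 (fun y' => pderiv1 (z t x) y' i) y j = _
    rw [hg]
    have hne : h t (Function.update y j (y j)) ≠ 0 := by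
      rw [Function.update_eq_self]; exact Hne
    have H : HasDerivAt
        (fun s => x ^ γ * (ε * h t (Function.update y j s) ^ (ε - 1)
          * hy t (Function.update y j s) i))
        (x ^ γ * (ε * (hy t y j * (ε - 1) * h t y ^ (ε - 1 - 1)) * hy t y i
          + ε * h t y ^ (ε - 1) * hyy t y i j)) (y j) := by
      have A := (hdy t htmem y j).rpow_const (p := ε - 1) (Or.inl hne)
      have C := ((A.const_mul ε).mul (hdyy t htmem y i j)).const_mul ((x:ℝ) ^ γ)
      simp only [Function.update_eq_self] at C
      exact C
    exact H.deriv
  -- time derivative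
  have hzt : deriv (fun s => z s x y) t = x ^ γ * (ht' t y * ε * h t y ^ (ε - 1)) :=
    (((hdt t htmem y).rpow_const (p := ε) (Or.inl Hne)).const_mul _).deriv
  -- the gradient as a scalar multiple
  have hMtf : Mt = (γ * x ^ (γ - 1) * (ε * h t y ^ (ε - 1))) • hy t y := by
    funext i
    rw [Pi.smul_apply, smul_eq_mul, hMt i]; ring
  have hw : w = Q1 • θ t y
      + (β * Real.sqrt (1 - ρ ^ 2) * (γ * x ^ (γ - 1) * (ε * h t y ^ (ε - 1))))
        • (σsᵀ *ᵥ hy t y) := by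
    show Q1 • θ t y + (β * Real.sqrt (1 - ρ ^ 2)) • (σsᵀ *ᵥ Mt) = _
    rw [hMtf, Matrix.mulVec_smul, smul_smul]
  have hu : (σsᵀ *ᵥ hy t y) ⬝ᵥ (σsᵀ *ᵥ hy t y) = hy t y ⬝ᵥ hy t y := by
    rw [Matrix.dotProduct_mulVec, Matrix.vecMul_transpose, Matrix.mulVec_mulVec, hσs,
      Matrix.one_mulVec]
  have hθu : θ t y ⬝ᵥ (σsᵀ *ᵥ hy t y) = (σs *ᵥ θ t y) ⬝ᵥ hy t y := by
    rw [Matrix.dotProduct_mulVec, Matrix.vecMul_transpose]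
  have hww : w ⬝ᵥ w = Q1 * Q1 * (θ t y ⬝ᵥ θ t y)
      + 2 * (Q1 * (β * Real.sqrt (1 - ρ ^ 2) * (γ * x ^ (γ - 1) * (ε * h t y ^ (ε - 1)))))
          * ((σs *ᵥ θ t y) ⬝ᵥ hy t y)
      + (β * Real.sqrt (1 - ρ ^ 2) * (γ * x ^ (γ - 1) * (ε * h t y ^ (ε - 1))))
        * (β * Real.sqrt (1 - ρ ^ 2) * (γ * x ^ (γ - 1) * (ε * h t y ^ (ε - 1))))
        * (hy t y ⬝ᵥ hy t y) := by
    rw [hw]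
    simp only [add_dotProduct, dotProduct_add, smul_dotProduct,
      dotProduct_smul, smul_eq_mul]
    rw [hu, hθu, dotProduct_comm (σsᵀ *ᵥ hy t y) (θ t y), hθu]
    ring
  -- trace of M0
  have htr : M0.trace = (x ^ γ * (ε * (ε - 1) * h t y ^ (ε - 1 - 1))) * (hy t y ⬝ᵥ hy t y)
      + (x ^ γ * (ε * h t y ^ (ε - 1))) * (hyy t y).trace := by
    have e : ∀ i, M0 i i = (x ^ γ * (ε * (ε - 1) * h t y ^ (ε - 1 - 1))) * (hy t y i * hy t y i)
        + (x ^ γ * (ε * h t y ^ (ε - 1))) * hyy t y i i := fun i => (hM0 i i).trans (by ring)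
    calc M0.trace = ∑ i, M0 i i := rfl
      _ = ∑ i, ((x ^ γ * (ε * (ε - 1) * h t y ^ (ε - 1 - 1))) * (hy t y i * hy t y i)
          + (x ^ γ * (ε * h t y ^ (ε - 1))) * hyy t y i i) :=
        Finset.sum_congr rfl fun i _ => e i
      _ = _ := by rw [Finset.sum_add_distrib, ← Finset.mul_sum, ← Finset.mul_sum]; rfl
  -- F ⬝ Qt
  have hFQt : F t y ⬝ᵥ Qt = (x ^ γ * (ε * h t y ^ (ε - 1))) * (F t y ⬝ᵥ hy t y) := by
    have hQtf : Qt = (x ^ γ * (ε * h t y ^ (ε - 1))) • hy t y := by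
      funext i
      rw [Pi.smul_apply, smul_eq_mul, hQt i]; ring
    rw [hQtf, dotProduct_smul, smul_eq_mul]
  -- |Mu|
  have hx2 : (0:ℝ) < x ^ (γ - 1 - 1) := Real.rpow_pos_of_pos hx _
  have hHε : (0:ℝ) < h t y ^ ε := Real.rpow_pos_of_pos Hpos _
  have habs : |Mu| = γ * (1 - γ) * x ^ (γ - 1 - 1) * h t y ^ ε := by
    have hp : 0 < γ * x ^ (γ - 1 - 1) * h t y ^ ε := by positivity
    rw [hMu, abs_of_neg (by nlinarith [hp])]; ring
  -- the consumption term
  have hpow : (γ / Q1) ^ (γ1 - 1) = x ^ γ * (h t y ^ (ε - 1) * h t y ^ (1 - qs)) := by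
    have hxγ : (0:ℝ) < x ^ γ := Real.rpow_pos_of_pos hx _
    have hd : γ / Q1 = x ^ (1 - γ) * h t y ^ (-ε) := by
      rw [hQ1, Real.rpow_neg Hpos.le,
        show x ^ (1 - γ) = x / x ^ γ from by rw [Real.rpow_sub hx, Real.rpow_one],
        show x ^ (γ - 1) = x ^ γ / x from by rw [Real.rpow_sub hx, Real.rpow_one]]
      field_simp
    rw [hd, Real.mul_rpow (Real.rpow_pos_of_pos hx _).le (Real.rpow_pos_of_pos Hpos _).le,
      ← Real.rpow_mul hx.le, ← Real.rpow_mul Hpos.le]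
    have e1 : (1 - γ) * (γ1 - 1) = γ := by
      rw [hγ1]; field_simp; ring
    have e2 : (-ε) * (γ1 - 1) = (ε - 1) + (1 - qs) := by
      rw [hγ1, hε, hqs]; field_simp; ring
    rw [e1, e2, Real.rpow_add Hpos]
  -- PDE consequences
  have hpde := hPDE t htmem y
  have hq : 1 / qs = 1 - ρ ^ 2 * γ := by rw [hqs, one_div, inv_inv]
  rw [hq] at hpde
  simp only [add_dotProduct, smul_dotProduct, smul_eq_mul] at hpde
  have hht : ht' t y = -(γ * (1 - ρ ^ 2 * γ) / (1 - γ)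
      * (r t y + (θ t y ⬝ᵥ θ t y) / (2 * (1 - γ))) * h t y
      + (F t y ⬝ᵥ hy t y
        + γ * Real.sqrt (1 - ρ ^ 2) * β / (1 - γ) * ((σs *ᵥ θ t y) ⬝ᵥ hy t y))
      + β ^ 2 / 2 * (hyy t y).trace
      + (1 - ρ ^ 2 * γ) * h t y ^ (1 - qs)) := by linarith
  have hg1 : 1 / γ1 = 1 - γ := by rw [hγ1, one_div, inv_inv]
  -- assemble
  rw [hzt, hFQt, hg1, hpow, hww, habs, htr, hQ1, hht]
  rw [show x ^ (γ - 1 - 1) = x ^ γ / x / x from by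
      rw [Real.rpow_sub hx, Real.rpow_sub hx, Real.rpow_one],
    show x ^ (γ - 1) = x ^ γ / x from by rw [Real.rpow_sub hx, Real.rpow_one],
    show h t y ^ (ε - 1 - 1) = h t y ^ ε / h t y / h t y from by
      rw [Real.rpow_sub Hpos, Real.rpow_sub Hpos, Real.rpow_one],
    show h t y ^ (ε - 1) = h t y ^ ε / h t y from by rw [Real.rpow_sub Hpos, Real.rpow_one]]
  subst hε; subst hqs
  set S := Real.sqrt (1 - ρ ^ 2) with hSdef
  have hS2 : ρ ^ 2 = 1 - S ^ 2 := by
    rw [hSdef, Real.sq_sqrt (by nlinarith)]; ring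
  rw [hS2]
  have hd2 : (1:ℝ) - (1 - S ^ 2) * γ ≠ 0 := by rw [← hS2]; exact hργ.ne'
  have hne1 : (1:ℝ) - γ ≠ 0 := h1γ.ne'
  have hxγ : x ^ γ ≠ 0 := (Real.rpow_pos_of_pos hx _).ne'
  have hHεne : h t y ^ ((1 - γ) / (1 - (1 - S ^ 2) * γ)) ≠ 0 := by
    exact (Real.rpow_pos_of_pos Hpos _).ne'
  have hγne : γ ≠ 0 := hγ0.ne'
  generalize h t y ^ ((1 - γ) / (1 - (1 - S ^ 2) * γ)) = A at hHεne ⊢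
  generalize h t y ^ (1 - (1 - (1 - S ^ 2) * γ)⁻¹) = B
  generalize x ^ γ = X at hxγ ⊢
  generalize hD : 1 - (1 - S ^ 2) * γ = D at hd2 ⊢
  field_simp
  subst hD
  ring
end

section
/- Let $\widetilde{T}>0$ and for each integer $n\ge 1$ set $\mathbf{g}_n^{*}=\inf_{x>0}\left(x\widetilde{T}-\ln x-(n-1)\ln(1+x)\right)$. Then there exist constants $\delta>0$ and $C>0$ such that $\exp\{\mathbf{g}_n^{*}\}\le C\,n^{-\delta n}$ for all $n\ge 1$; in particular the sequence $\exp\{\mathbf{g}_n^{*}\}$ converges to zero faster than any geometric sequence, i.e. $\lim_{n\to\infty}\exp\{\mathbf{g}_n^{*}\}/\lambda^{n}=0$ for every $\lambda\in(0,1)$. -/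
/-- (Remark 3.1 of the paper.) With
`gₙ* = inf_{x>0} (x T̃ - ln x - (n-1) ln(1+x))`, there are `δ > 0` and `C > 0` with
`exp(gₙ*) ≤ C n^{-δ n}` for all `n ≥ 1`; in particular `exp(gₙ*)/λⁿ → 0` for every
`λ ∈ (0,1)`, i.e. the convergence is faster than any geometric rate. -/
theorem stmt6 (Tt : ℝ) (hT : 0 < Tt) :
    let gstar : ℕ → ℝ := fun n =>
      sInf {v : ℝ | ∃ x : ℝ, 0 < x ∧
        v = x * Tt - Real.log x - ((n : ℝ) - 1) * Real.log (1 + x)}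
    (∃ δ : ℝ, 0 < δ ∧ ∃ C : ℝ, 0 < C ∧
        ∀ n : ℕ, 1 ≤ n → Real.exp (gstar n) ≤ C * (n : ℝ) ^ (-(δ * (n : ℝ)))) ∧
    (∀ l : ℝ, 0 < l → l < 1 →
      Filter.Tendsto (fun n : ℕ => Real.exp (gstar n) / l ^ n)
        Filter.atTop (nhds 0)) := by
  intro gstar
  have hT2 : (0:ℝ) < Tt / 2 := by linarith
  -- key bound: gstar n ≤ n*Tt - n*log n for all n ≥ 1
  have key : ∀ n : ℕ, 1 ≤ n →
      gstar n ≤ (n : ℝ) * Tt - (n : ℝ) * Real.log n := by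
    intro n hn
    have hn0 : (0:ℝ) < n := by exact_mod_cast hn
    have hn1 : (1:ℝ) ≤ n := by exact_mod_cast hn
    have hbdd : BddBelow {v : ℝ | ∃ x : ℝ, 0 < x ∧
        v = x * Tt - Real.log x - ((n : ℝ) - 1) * Real.log (1 + x)} := by
      refine ⟨1 - Real.log (2 / Tt) - Tt / 2 + n - n * Real.log (2 * n / Tt), ?_⟩
      rintro v ⟨x, hx, rfl⟩
      -- log x ≤ x*(Tt/2) - 1 + log (2/Tt)
      have h1 : Real.log x ≤ x * (Tt / 2) - 1 + Real.log (2 / Tt) := by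
        have h := Real.log_le_sub_one_of_pos (mul_pos hx hT2)
        rw [Real.log_mul (ne_of_gt hx) (ne_of_gt hT2)] at h
        have hlog : Real.log (Tt / 2) = - Real.log (2 / Tt) := by
          rw [← Real.log_inv]
          congr 1
          field_simp
        rw [hlog] at h
        linarith
      -- n * log (1+x) ≤ (1+x)*(Tt/2) - n + n*log (2n/Tt)
      have h2 : (n : ℝ) * Real.log (1 + x) ≤
          (1 + x) * (Tt / 2) - n + n * Real.log (2 * n / Tt) := by
        have hpos : (0:ℝ) < (1 + x) * (Tt / (2 * n)) := by positivity
        have h := Real.log_le_sub_one_of_pos hpos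
        rw [Real.log_mul (by linarith) (by positivity)] at h
        have hlog : Real.log (Tt / (2 * n)) = - Real.log (2 * n / Tt) := by
          rw [← Real.log_inv]
          congr 1
          field_simp
        rw [hlog] at h
        -- h : log (1+x) - log (2n/Tt) ≤ (1+x)*(Tt/(2n)) - 1
        have h' := mul_le_mul_of_nonneg_left h (le_of_lt hn0)
        have e1 : (n : ℝ) * ((1 + x) * (Tt / (2 * n))) = (1 + x) * (Tt / 2) := by
          field_simp
        nlinarith [h']
      have hlx : 0 ≤ Real.log (1 + x) := Real.log_nonneg (by linarith)
      have h3 : ((n : ℝ) - 1) * Real.log (1 + x) ≤ (n : ℝ) * Real.log (1 + x) :=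
        mul_le_mul_of_nonneg_right (by linarith) hlx
      linarith
    have hmem : (n : ℝ) * Tt - Real.log n - ((n : ℝ) - 1) * Real.log (1 + n) ∈
        {v : ℝ | ∃ x : ℝ, 0 < x ∧
          v = x * Tt - Real.log x - ((n : ℝ) - 1) * Real.log (1 + x)} :=
      ⟨n, hn0, rfl⟩
    have hle : gstar n ≤ (n : ℝ) * Tt - Real.log n - ((n : ℝ) - 1) * Real.log (1 + n) :=
      csInf_le hbdd hmem
    have hmono : Real.log (n : ℝ) ≤ Real.log (1 + n) :=
      Real.log_le_log hn0 (by linarith)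
    have hlogn : 0 ≤ Real.log (n : ℝ) := Real.log_nonneg hn1
    have h4 : ((n : ℝ) - 1) * Real.log n ≤ ((n : ℝ) - 1) * Real.log (1 + n) :=
      mul_le_mul_of_nonneg_left hmono (by linarith)
    nlinarith
  constructor
  · refine ⟨1/2, by norm_num, Real.exp (Real.exp (2 * Tt - 1) / 2), Real.exp_pos _, ?_⟩
    intro n hn
    have hn0 : (0:ℝ) < n := by exact_mod_cast hn
    have hlogn : 0 ≤ Real.log (n : ℝ) := Real.log_nonneg (by exact_mod_cast hn)
    rw [Real.rpow_def_of_pos hn0, ← Real.exp_add]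
    apply Real.exp_le_exp.mpr
    -- need : gstar n ≤ exp(2Tt-1)/2 + log n * (-(1/2 * n))
    have hK : Real.log (Real.exp (2 * Tt - 1) / n) ≤ Real.exp (2 * Tt - 1) / n - 1 :=
      Real.log_le_sub_one_of_pos (by positivity)
    rw [Real.log_div (Real.exp_ne_zero _) (ne_of_gt hn0), Real.log_exp] at hK
    have h2 : (n : ℝ) * (2 * Tt - Real.log n) ≤ Real.exp (2 * Tt - 1) := by
      have h := mul_le_mul_of_nonneg_left hK (le_of_lt hn0)
      have e : (n : ℝ) * (Real.exp (2 * Tt - 1) / n - 1) = Real.exp (2 * Tt - 1) - n := by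
        field_simp
      nlinarith [h]
    nlinarith [key n hn]
  · intro l hl0 hl1
    obtain ⟨c, hc⟩ : ∃ c : ℝ, c = Tt - Real.log l := ⟨_, rfl⟩
    apply tendsto_of_tendsto_of_tendsto_of_le_of_le' (tendsto_const_nhds)
      (tendsto_const_div_atTop_nhds_zero_nat (Real.exp c))
    · filter_upwards with n
      positivity
    · filter_upwards [Filter.eventually_ge_atTop (max 1 ⌈Real.exp c⌉₊)] with n hnN
      have hn1 : 1 ≤ n := le_trans (le_max_left _ _) hnN
      have hn0 : (0:ℝ) < n := by exact_mod_cast hn1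
      have hec : Real.exp c ≤ (n : ℝ) := by
        calc Real.exp c ≤ (⌈Real.exp c⌉₊ : ℝ) := Nat.le_ceil _
          _ ≤ (n : ℝ) := by exact_mod_cast le_trans (le_max_right _ _) hnN
      have hclog : c ≤ Real.log n := by
        calc c = Real.log (Real.exp c) := (Real.log_exp c).symm
          _ ≤ Real.log n := Real.log_le_log (Real.exp_pos _) hec
      -- exp(gstar n)/l^n = exp(gstar n - n * log l)
      have hpow : l ^ n = Real.exp ((n : ℝ) * Real.log l) := by
        rw [Real.exp_nat_mul, Real.exp_log hl0]
      have hdiv : Real.exp (gstar n) / l ^ n = Real.exp (gstar n - (n : ℝ) * Real.log l) := by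
        rw [hpow, ← Real.exp_sub]
      rw [hdiv]
      have hub : Real.exp c / (n : ℝ) = Real.exp (c - Real.log n) := by
        rw [Real.exp_sub, Real.exp_log hn0]
      rw [hub]
      apply Real.exp_le_exp.mpr
      -- gstar n - n log l ≤ c - log n
      have hkey := key n hn1
      have hn1' : (1:ℝ) ≤ n := by exact_mod_cast hn1
      have h5 : ((n : ℝ) - 1) * c ≤ ((n : ℝ) - 1) * Real.log n :=
        mul_le_mul_of_nonneg_left hclog (by linarith)
      have : gstar n ≤ (n : ℝ) * Tt - (n : ℝ) * Real.log n := hkey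
      nlinarith
end
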